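/- Let c, r, T > 0 and x ∈ 𝓛. Then: (i) the Lebesgue measure of {t ∈ [0,T] : g_t x ∈ F_{r,c}} is at most r; (ii) if x ∈ F_{T,c} ∖ F_{r,c} then the Lebesgue measure of {t ∈ [0,T] : g_t x ∈ F_{r,c}} equals r; (iii) if g_t x ∈ F_{r,c} for some t ∈ [0,T], then x ∈ F_{T+r,c}. -/

import Mathlib

noncomputable section

open MeasureTheory Metric Filter Topology
open scoped ENNReal

/-- The index of the coordinate `x_{n+2}` (0-indexed: `n+1`). -/
def lastC (n : ℕ) : Fin (n + 2) := Fin.last (n + 1)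

/-- The index of the coordinate `x_{n+1}` (0-indexed: `n`). -/
def sndC (n : ℕ) : Fin (n + 2) := ⟨n, by omega⟩

/-- The quadratic form `Q(x) = x_1² + ⋯ + x_{n+1}² − x_{n+2}²`. -/
def Qf (n : ℕ) (x : EuclideanSpace ℝ (Fin (n + 2))) : ℝ :=
  (∑ i : Fin (n + 1), x (Fin.castSucc i) ^ 2) - x (lastC n) ^ 2

/-- The positive light cone. -/
def lightCone (n : ℕ) : Set (EuclideanSpace ℝ (Fin (n + 2))) :=
  {x | Qf n x = 0 ∧ 0 ≤ x (lastC n)}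

/-- `Λ₀`: the intersection of the light cone with `ℤ^{n+1} × ℤ_{>0}`. -/
def Lat0 (n : ℕ) : Set (EuclideanSpace ℝ (Fin (n + 2))) :=
  {x | x ∈ lightCone n ∧ (∀ i, ∃ m : ℤ, x i = (m : ℝ)) ∧ 0 < x (lastC n)}

/-- The set `F_{T,c}`. -/
def Fset (n : ℕ) (T c : ℝ) : Set (EuclideanSpace ℝ (Fin (n + 2))) :=
  {x | x ∈ lightCone n ∧ x (lastC n) ^ 2 - x (sndC n) ^ 2 < c ^ 2 ∧
    1 ≤ x (sndC n) + x (lastC n) ∧ x (sndC n) + x (lastC n) < Real.exp T}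

/-- The set `E_{T,c}`. -/
def Eset (n : ℕ) (T c : ℝ) : Set (EuclideanSpace ℝ (Fin (n + 2))) :=
  {x | x ∈ lightCone n ∧ 2 * x (lastC n) * (x (lastC n) - x (sndC n)) < c ^ 2 ∧
    1 ≤ x (lastC n) ∧ x (lastC n) < Real.cosh T}

/-- The first `n+1` coordinates of a point of `ℝ^{n+2}`. -/
def firstPart (n : ℕ) (x : EuclideanSpace ℝ (Fin (n + 2))) : EuclideanSpace ℝ (Fin (n + 1)) :=
  WithLp.toLp 2 fun i => x (Fin.castSucc i)

/-- The one-parameter diagonal flow `g_t`. -/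
def gmap (n : ℕ) (t : ℝ) (x : EuclideanSpace ℝ (Fin (n + 2))) :
    EuclideanSpace ℝ (Fin (n + 2)) :=
  WithLp.toLp 2 fun i =>
    if i = sndC n then Real.cosh t * x (sndC n) - Real.sinh t * x (lastC n)
    else if i = lastC n then - Real.sinh t * x (sndC n) + Real.cosh t * x (lastC n)
    else x i

/-!
In the null coordinates `u = x_{n+1} + x_{n+2}` and `v = x_{n+2} - x_{n+1}` the flow acts by
`u ↦ e^{-t} u`, `v ↦ e^t v`, so it preserves `Q`, the light cone and `uv = x_{n+2}² - x_{n+1}²`.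
Hence for `x ∈ 𝓛` we have `g_t x ∈ F_{r,c}` exactly when `uv < c²` and `t` lies in the
interval `(log u - r, log u]` of length `r`; all three claims are read off this interval.
-/

open Real Set

def nullCoordPlus (n : ℕ) (x : EuclideanSpace ℝ (Fin (n + 2))) : ℝ := x (sndC n) + x (lastC n)

def nullCoordMinus (n : ℕ) (x : EuclideanSpace ℝ (Fin (n + 2))) : ℝ := x (lastC n) - x (sndC n)

section NullCoordinates

variable {n : ℕ} {x : EuclideanSpace ℝ (Fin (n + 2))}

theorem sndC_ne_lastC (n : ℕ) : sndC n ≠ lastC n := by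
  simp [sndC, lastC, Fin.ext_iff]

theorem castSucc_last_eq_sndC (n : ℕ) : Fin.castSucc (Fin.last n) = sndC n := by
  simp [sndC, Fin.ext_iff]

theorem Qf_eq_sum_sub_nullCoord (x : EuclideanSpace ℝ (Fin (n + 2))) :
    Qf n x = ∑ i : Fin n, x (Fin.castSucc (Fin.castSucc i)) ^ 2 -
      nullCoordPlus n x * nullCoordMinus n x := by
  rw [Qf, Fin.sum_univ_castSucc, castSucc_last_eq_sndC, nullCoordPlus, nullCoordMinus]
  ring

theorem sq_lastC_sub_sq_sndC (x : EuclideanSpace ℝ (Fin (n + 2))) :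
    x (lastC n) ^ 2 - x (sndC n) ^ 2 = nullCoordPlus n x * nullCoordMinus n x := by
  rw [nullCoordPlus, nullCoordMinus]
  ring

theorem lastC_eq_nullCoord (x : EuclideanSpace ℝ (Fin (n + 2))) :
    x (lastC n) = (nullCoordPlus n x + nullCoordMinus n x) / 2 := by
  rw [nullCoordPlus, nullCoordMinus]
  ring

theorem nullCoord_nonneg (hx : x ∈ lightCone n) :
    0 ≤ nullCoordPlus n x ∧ 0 ≤ nullCoordMinus n x := by
  have hprod : 0 ≤ nullCoordPlus n x * nullCoordMinus n x := by
    have hQ : Qf n x = 0 := hx.1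
    rw [Qf_eq_sum_sub_nullCoord, sub_eq_zero] at hQ
    exact hQ ▸ Finset.sum_nonneg fun i _ => sq_nonneg _
  have hsum : 0 ≤ nullCoordPlus n x + nullCoordMinus n x := by
    linarith [hx.2, lastC_eq_nullCoord x]
  constructor <;> nlinarith

end NullCoordinates

section Flow

variable {n : ℕ} {x : EuclideanSpace ℝ (Fin (n + 2))}

theorem gmap_apply_sndC (t : ℝ) (x : EuclideanSpace ℝ (Fin (n + 2))) :
    gmap n t x (sndC n) = cosh t * x (sndC n) - sinh t * x (lastC n) := by
  simp [gmap]

theorem gmap_apply_lastC (t : ℝ) (x : EuclideanSpace ℝ (Fin (n + 2))) :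
    gmap n t x (lastC n) = -sinh t * x (sndC n) + cosh t * x (lastC n) := by
  simp [gmap, (sndC_ne_lastC n).symm]

theorem gmap_apply_of_ne {i : Fin (n + 2)} (hs : i ≠ sndC n) (hl : i ≠ lastC n) (t : ℝ)
    (x : EuclideanSpace ℝ (Fin (n + 2))) : gmap n t x i = x i := by
  simp [gmap, hs, hl]

theorem nullCoordPlus_gmap (t : ℝ) (x : EuclideanSpace ℝ (Fin (n + 2))) :
    nullCoordPlus n (gmap n t x) = exp (-t) * nullCoordPlus n x := by
  rw [nullCoordPlus, nullCoordPlus, gmap_apply_sndC, gmap_apply_lastC, ← cosh_sub_sinh]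
  ring

theorem nullCoordMinus_gmap (t : ℝ) (x : EuclideanSpace ℝ (Fin (n + 2))) :
    nullCoordMinus n (gmap n t x) = exp t * nullCoordMinus n x := by
  rw [nullCoordMinus, nullCoordMinus, gmap_apply_sndC, gmap_apply_lastC, ← cosh_add_sinh]
  ring

theorem nullCoord_mul_gmap (t : ℝ) (x : EuclideanSpace ℝ (Fin (n + 2))) :
    nullCoordPlus n (gmap n t x) * nullCoordMinus n (gmap n t x) =
      nullCoordPlus n x * nullCoordMinus n x := by
  rw [nullCoordPlus_gmap, nullCoordMinus_gmap, mul_mul_mul_comm, ← exp_add, neg_add_cancel,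
    exp_zero, one_mul]

theorem sq_lastC_sub_sq_sndC_gmap (t : ℝ) (x : EuclideanSpace ℝ (Fin (n + 2))) :
    gmap n t x (lastC n) ^ 2 - gmap n t x (sndC n) ^ 2 = x (lastC n) ^ 2 - x (sndC n) ^ 2 := by
  rw [sq_lastC_sub_sq_sndC, sq_lastC_sub_sq_sndC, nullCoord_mul_gmap]

theorem Qf_gmap (t : ℝ) (x : EuclideanSpace ℝ (Fin (n + 2))) : Qf n (gmap n t x) = Qf n x := by
  have hfixed (i : Fin n) :
      gmap n t x (Fin.castSucc (Fin.castSucc i)) = x (Fin.castSucc (Fin.castSucc i)) := by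
    refine gmap_apply_of_ne ?_ ?_ t x <;>
      simp [sndC, lastC, Fin.ext_iff, Nat.ne_of_lt i.isLt, Nat.ne_of_lt (Nat.lt_succ_of_lt i.isLt)]
  simp only [Qf_eq_sum_sub_nullCoord, hfixed, nullCoord_mul_gmap]

theorem gmap_mem_lightCone (hx : x ∈ lightCone n) (t : ℝ) : gmap n t x ∈ lightCone n := by
  obtain ⟨hu, hv⟩ := nullCoord_nonneg hx
  refine ⟨(Qf_gmap t x).trans hx.1, ?_⟩
  rw [lastC_eq_nullCoord, nullCoordPlus_gmap, nullCoordMinus_gmap]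
  positivity

end Flow

section Visits

variable {n : ℕ} {x : EuclideanSpace ℝ (Fin (n + 2))} {r c t : ℝ}

theorem mem_Fset_iff_log :
    x ∈ Fset n r c ↔ x ∈ lightCone n ∧ x (lastC n) ^ 2 - x (sndC n) ^ 2 < c ^ 2 ∧
      0 < nullCoordPlus n x ∧ log (nullCoordPlus n x) ∈ Ico 0 r := by
  simp only [Fset, mem_ofPred_eq, mem_Ico, nullCoordPlus]
  constructor
  · rintro ⟨hx, hc, h1, hr⟩
    have hu : 0 < nullCoordPlus n x := one_pos.trans_le h1
    exact ⟨hx, hc, hu, (log_nonneg_iff hu).2 h1, (log_lt_iff_lt_exp hu).2 hr⟩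
  · rintro ⟨hx, hc, hu, h1, hr⟩
    exact ⟨hx, hc, (log_nonneg_iff hu).1 h1, (log_lt_iff_lt_exp hu).1 hr⟩

theorem gmap_mem_Fset_iff (hx : x ∈ lightCone n) :
    gmap n t x ∈ Fset n r c ↔ x (lastC n) ^ 2 - x (sndC n) ^ 2 < c ^ 2 ∧
      0 < nullCoordPlus n x ∧
      t ∈ Ioc (log (nullCoordPlus n x) - r) (log (nullCoordPlus n x)) := by
  rw [mem_Fset_iff_log, sq_lastC_sub_sq_sndC_gmap, nullCoordPlus_gmap,
    mul_pos_iff_of_pos_left (exp_pos _)]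
  simp only [gmap_mem_lightCone hx, true_and, mem_Ico, mem_Ioc]
  refine and_congr_right fun _ => and_congr_right fun hu => ?_
  rw [log_mul (exp_pos _).ne' hu.ne', log_exp]
  constructor <;> rintro ⟨h1, h2⟩ <;> constructor <;> linarith

end Visits

theorem orbit_visit_times_general (n : ℕ) (c r T : ℝ) (x : EuclideanSpace ℝ (Fin (n + 2)))
    (hx : x ∈ lightCone n) :
    volume {t ∈ Set.Icc (0 : ℝ) T | gmap n t x ∈ Fset n r c} ≤ ENNReal.ofReal r ∧
    (x ∈ Fset n T c \ Fset n r c →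
      volume {t ∈ Set.Icc (0 : ℝ) T | gmap n t x ∈ Fset n r c} = ENNReal.ofReal r) ∧
    ((∃ t ∈ Set.Icc (0 : ℝ) T, gmap n t x ∈ Fset n r c) → x ∈ Fset n (T + r) c) := by
  set u := nullCoordPlus n x
  have hvisits : {t ∈ Icc (0 : ℝ) T | gmap n t x ∈ Fset n r c} ⊆ Ioc (log u - r) (log u) :=
    fun t ht => ((gmap_mem_Fset_iff hx).1 ht.2).2.2
  refine ⟨?_, ?_, ?_⟩
  · calc volume {t ∈ Icc (0 : ℝ) T | gmap n t x ∈ Fset n r c}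
        ≤ volume (Ioc (log u - r) (log u)) := measure_mono hvisits
      _ = ENNReal.ofReal r := by rw [volume_Ioc, sub_sub_cancel]
  · rintro ⟨hxT, hxr⟩
    obtain ⟨-, hc, hu, h0, hT⟩ := mem_Fset_iff_log.1 hxT
    have hr : r ≤ log u := not_lt.1 fun h => hxr (mem_Fset_iff_log.2 ⟨hx, hc, hu, h0, h⟩)
    have hall : Ioc (log u - r) (log u) ⊆ {t ∈ Icc (0 : ℝ) T | gmap n t x ∈ Fset n r c} :=
      fun t ht => ⟨⟨by linarith [ht.1], ht.2.trans hT.le⟩, (gmap_mem_Fset_iff hx).2 ⟨hc, hu, ht⟩⟩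
    rw [hvisits.antisymm hall, volume_Ioc, sub_sub_cancel]
  · rintro ⟨t, ⟨ht0, htT⟩, hmem⟩
    obtain ⟨hc, hu, hlo, hhi⟩ := (gmap_mem_Fset_iff hx).1 hmem
    exact mem_Fset_iff_log.2 ⟨hx, hc, hu, by linarith, by linarith⟩

/-- **Section 4 estimates** for visits of the `g_t`-orbit of `x ∈ 𝓛` to `F_{r,c}`. -/
theorem orbit_visit_times (n : ℕ) (hn : 1 ≤ n) (c r T : ℝ) (hc : 0 < c) (hr : 0 < r)
    (hT : 0 < T) (x : EuclideanSpace ℝ (Fin (n + 2))) (hx : x ∈ lightCone n) :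
    volume {t ∈ Set.Icc (0 : ℝ) T | gmap n t x ∈ Fset n r c} ≤ ENNReal.ofReal r ∧
    (x ∈ Fset n T c \ Fset n r c →
      volume {t ∈ Set.Icc (0 : ℝ) T | gmap n t x ∈ Fset n r c} = ENNReal.ofReal r) ∧
    ((∃ t ∈ Set.Icc (0 : ℝ) T, gmap n t x ∈ Fset n r c) → x ∈ Fset n (T + r) c) :=
  orbit_visit_times_general n c r T x hx
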